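/- Let G = (V,E) be a finite simple graph, let k be a natural number, let c : V → ℕ be a proper coloring of G, and let {u,v} ∈ E be an edge such that the number of distinct colors appearing on the common neighborhood, |{c(w) : w ∈ N(u) ∩ N(v)}|, is at most θ(G,k) − 3. Then θ(G,k) = θ(G', k), where G' is the graph (V, E ∖ {{u,v}}) obtained from G by deleting the edge {u,v}. -/

import Mathlib

open SimpleGraph

/-- `theta G k` is the minimum, over all vertex subsets `S` with `|S| ≤ k`, of the
clique number of the subgraph of `G` induced on the complement of `S`. -/
noncomputable def theta {V : Type*} (G : SimpleGraph V) (k : ℕ) : ℕ :=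
  sInf {m | ∃ S : Finset V, S.card ≤ k ∧ (G.induce ((↑S : Set V)ᶜ)).cliqueNum = m}

/-!
Deleting an edge never increases a clique number, so `θ(G', k) ≤ θ(G, k)`. Conversely, fix `S`
with `|S| ≤ k` and a maximum clique `K` of `G - S`, so `|K| ≥ θ(G, k)`. If `K` contained both `u`
and `v`, then `K ∖ {u, v}` would lie in `N(u) ∩ N(v)` and, being a clique, would receive pairwise
distinct colours, giving `|K| - 2 ≤ θ(G, k) - 3`. Hence `K` misses `u` or `v` and is still a
clique of `G' - S`, so `ω(G' - S) ≥ θ(G, k)`.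
-/

open Finset

namespace SimpleGraph

variable {V : Type*} {G H : SimpleGraph V}

lemma cliqueNum_mono [Finite V] (h : G ≤ H) : G.cliqueNum ≤ H.cliqueNum := by
  obtain ⟨t, ht⟩ := G.exists_isNClique_cliqueNum
  rw [← ht.card_eq]
  exact (ht.isClique.mono h).card_le_cliqueNum

lemma IsClique.card_le_cliqueNum_induce [Finite V] {s : Set V} {t : Finset V}
    (ht : G.IsClique (t : Set V)) (hts : (t : Set V) ⊆ s) : #t ≤ (G.induce s).cliqueNum := by
  classical
  let t' : Finset s := t.subtype (· ∈ s)
  have ht' : t'.map (.subtype _) = t := by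
    ext x
    simpa [t'] using fun hx => hts hx
  have hclique : (G.induce s).IsNClique #t' t' := by
    rw [isNClique_induce_iff, ht']
    exact ⟨ht, by rw [← ht', card_map]⟩
  rw [← ht', card_map]
  exact hclique.isClique.card_le_cliqueNum

lemma exists_isClique_card_eq_cliqueNum_induce (G : SimpleGraph V) (s : Set V) :
    ∃ t : Finset V, (t : Set V) ⊆ s ∧ G.IsClique (t : Set V) ∧ #t = (G.induce s).cliqueNum := by
  obtain ⟨t, ht⟩ := (G.induce s).exists_isNClique_cliqueNum
  rw [isNClique_induce_iff] at ht
  refine ⟨t.map (.subtype _), ?_, ht.isClique, ht.card_eq⟩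
  intro x hx
  obtain ⟨y, -, rfl⟩ := mem_map.mp hx
  exact y.2

lemma IsClique.deleteEdges_singleton {s : Set V} (hs : G.IsClique s) {u v : V}
    (huv : ¬(u ∈ s ∧ v ∈ s)) : (G.deleteEdges {s(u, v)}).IsClique s := by
  intro a ha b hb hab
  refine (deleteEdges_adj ..).mpr ⟨hs ha hb hab, ?_⟩
  simp only [Set.mem_singleton_iff, Sym2.eq_iff]
  rintro (⟨rfl, rfl⟩ | ⟨rfl, rfl⟩)
  · exact huv ⟨ha, hb⟩
  · exact huv ⟨hb, ha⟩

/-- Only `u` and `v` can lie outside the common neighbourhood of `u` and `v`, and a proper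
colouring is injective on a clique. -/
lemma IsClique.card_le_ncard_image_commonNeighbors_add_two [Finite V] {α : Type*} {c : V → α}
    (hc : ∀ a b : V, G.Adj a b → c a ≠ c b) {t : Finset V} (ht : G.IsClique (t : Set V))
    {u v : V} (hu : u ∈ t) (hv : v ∈ t) :
    #t ≤ (c '' G.commonNeighbors u v).ncard + 2 := by
  classical
  have herase_u := pred_card_le_card_erase (s := t) (a := u)
  have herase_v := pred_card_le_card_erase (s := t.erase u) (a := v)
  set r := (t.erase u).erase v
  have hr : (r : Set V) ⊆ G.commonNeighbors u v := by
    intro w hw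
    simp only [r, coe_erase, Set.mem_sdiff, Set.mem_singleton_iff, mem_coe] at hw
    obtain ⟨⟨hwt, hwu⟩, hwv⟩ := hw
    exact ⟨ht hu hwt (Ne.symm hwu), ht hv hwt (Ne.symm hwv)⟩
  have hinj : Set.InjOn c r := by
    intro a ha b hb hcab
    by_contra hab
    exact hc a b (ht (erase_subset _ _ (erase_subset _ _ ha))
      (erase_subset _ _ (erase_subset _ _ hb)) hab) hcab
  have hcard : #r ≤ (c '' G.commonNeighbors u v).ncard := by
    rw [← Set.ncard_coe_finset, ← hinj.ncard_image]
    exact Set.ncard_le_ncard (Set.image_mono hr) (Set.toFinite _)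
  omega

end SimpleGraph

section Theta

variable {V : Type*} {G H : SimpleGraph V} {k : ℕ}

lemma theta_le_cliqueNum_induce {S : Finset V} (hS : #S ≤ k) :
    theta G k ≤ (G.induce ((S : Set V)ᶜ)).cliqueNum :=
  Nat.sInf_le ⟨S, hS, rfl⟩

lemma le_theta_of_forall_le_cliqueNum_induce {m : ℕ}
    (h : ∀ S : Finset V, #S ≤ k → m ≤ (G.induce ((S : Set V)ᶜ)).cliqueNum) : m ≤ theta G k := by
  refine le_csInf ⟨_, ∅, by simp, rfl⟩ ?_
  rintro _ ⟨S, hS, rfl⟩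
  exact h S hS

lemma theta_mono [Finite V] (h : G ≤ H) (k : ℕ) : theta G k ≤ theta H k :=
  le_theta_of_forall_le_cliqueNum_induce fun _ hS =>
    (theta_le_cliqueNum_induce hS).trans (cliqueNum_mono fun _ _ hab => h hab)

lemma theta_le_theta_deleteEdges [Finite V] {α : Type*} {c : V → α}
    (hc : ∀ a b : V, G.Adj a b → c a ≠ c b) {u v : V}
    (h : (c '' G.commonNeighbors u v).ncard + 3 ≤ theta G k) :
    theta G k ≤ theta (G.deleteEdges {s(u, v)}) k := by
  refine le_theta_of_forall_le_cliqueNum_induce fun S hS => ?_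
  obtain ⟨t, htS, ht, hcard⟩ := G.exists_isClique_card_eq_cliqueNum_induce ((S : Set V)ᶜ)
  have hθ : theta G k ≤ #t := hcard ▸ theta_le_cliqueNum_induce hS
  have huv : ¬(u ∈ t ∧ v ∈ t) := fun ⟨hu, hv⟩ => by
    have hcolors := ht.card_le_ncard_image_commonNeighbors_add_two hc hu hv
    omega
  exact hθ.trans ((ht.deleteEdges_singleton huv).card_le_cliqueNum_induce htS)

end Theta

theorem triangle_color_reduction_general {V : Type*} [Fintype V] (G : SimpleGraph V) (k : ℕ)
    (c : V → ℕ) (hc : ∀ a b : V, G.Adj a b → c a ≠ c b)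
    (u v : V)
    (h : ((c '' (G.neighborSet u ∩ G.neighborSet v)).ncard : ℤ) ≤ (theta G k : ℤ) - 3) :
    theta G k = theta (G.deleteEdges {s(u, v)}) k :=
  le_antisymm (theta_le_theta_deleteEdges hc (by rw [commonNeighbors]; omega))
    (theta_mono (deleteEdges_le _) k)

theorem triangle_color_reduction {V : Type*} [Fintype V] (G : SimpleGraph V) (k : ℕ)
    (c : V → ℕ) (hc : ∀ a b : V, G.Adj a b → c a ≠ c b)
    (u v : V) (hadj : G.Adj u v)
    (h : ((c '' (G.neighborSet u ∩ G.neighborSet v)).ncard : ℤ) ≤ (theta G k : ℤ) - 3) :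
    theta G k = theta (G.deleteEdges {s(u, v)}) k :=
  triangle_color_reduction_general G k c hc u v h
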